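/- Fix an adversary strategy (Ã₁,…,Ã_M) ∈ 𝒮_A(Δ) and let Q_max = max_{i∈[M]} ( −log min_{y∈𝒳} (P_iÃ_i)(y) ). Then for every i ∈ [M], under H_i the stopping time satisfies P_i(T* ≤ n) = 0 for every integer n < log(1/α)/Q_max; consequently T* ≥ log(1/α)/Q_max holds P_i-almost surely, and T* → ∞ P_i-almost surely as α → 0⁺. -/

import Mathlib

open MeasureTheory Filter Finset Set Topology
open scoped ENNReal NNReal ENat

namespace AHT

noncomputable section

variable {X : Type*}

/-- A probability distribution on a finite alphabet. -/
def IsDist [Fintype X] (P : X → ℝ) : Prop :=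
  (∀ x, 0 ≤ P x) ∧ ∑ x, P x = 1

/-- Kullback–Leibler divergence. -/
def KL [Fintype X] (P Q : X → ℝ) : ℝ :=
  ∑ a, P a * Real.log (P a / Q a)

/-- Bhattacharyya distance. -/
def Bhat [Fintype X] (Q0 Q1 : X → ℝ) : ℝ :=
  -Real.log (∑ x, (Q0 x) ^ ((1 : ℝ) / 2) * (Q1 x) ^ ((1 : ℝ) / 2))

/-- Empirical distribution (type) of the first `n` samples. -/
def emp [Fintype X] [DecidableEq X] (n : ℕ) (ω : ℕ → X) (a : X) : ℝ :=
  (((Finset.range n).filter fun k => ω k = a).card : ℝ) / n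

/-- Row-stochastic matrix (adversary channel). -/
def RowStoch [Fintype X] (A : X → X → ℝ) : Prop :=
  (∀ x y, 0 ≤ A x y) ∧ ∀ x, ∑ y, A x y = 1

/-- Output distribution of channel `A` when the input distribution is `P`. -/
def push [Fintype X] (P : X → ℝ) (A : X → X → ℝ) (y : X) : ℝ :=
  ∑ x, P x * A x y

/-- `μ` is the law of an i.i.d. sequence with one-dimensional marginal `Q`. -/
def IsIID [Fintype X] [MeasurableSpace X] (μ : Measure (ℕ → X)) (Q : X → ℝ) : Prop :=
  IsProbabilityMeasure μ ∧
    ∀ (n : ℕ) (v : Fin n → X),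
      μ {ω | ∀ k : Fin n, ω (k : ℕ) = v k} = ENNReal.ofReal (∏ k, Q (v k))

/-- Admissible adversary channels for hypothesis distribution `Pi`. -/
def Adm [Fintype X] (d : (X → ℝ) → (X → ℝ) → ℝ) (Δ : ℝ) (Pi : X → ℝ) :
    Set (X → X → ℝ) :=
  {A | RowStoch A ∧ d Pi (push Pi A) ≤ Δ ∧ ∀ y, 0 < push Pi A y}

/-- The constant `C = Σ_{n ≥ 1} e^{-n^{1-ζ}}` with `ζ = 0.85`. -/
def Cζ : ℝ := ∑' n : ℕ, Real.exp (-((n : ℝ) + 1) ^ (0.15 : ℝ))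

/-- The thresholds `γ_n` (with `K = |𝒳|`). -/
def gammaTh (K M : ℕ) (α : ℝ) (n : ℕ) : ℝ :=
  Real.log (Cζ / α) / n + 1 / (n : ℝ) ^ (0.85 : ℝ) +
    ((K : ℝ) * Real.log ((n : ℝ) + 1) + Real.log ((M : ℝ) - 1)) / n

/-- The statistic `Z_i^{(n)}`. -/
def Zstat [Fintype X] [DecidableEq X] {M : ℕ} (P : Fin M → X → ℝ)
    (d : (X → ℝ) → (X → ℝ) → ℝ) (Δ : ℝ) (i : Fin M) (n : ℕ) (ω : ℕ → X) : ℝ :=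
  sInf {r | ∃ j, j ≠ i ∧ ∃ A ∈ Adm d Δ (P j), r = KL (emp n ω) (push (P j) A)}

/-- The one-sided stopping times `T_i`. -/
def Ti [Fintype X] [DecidableEq X] {M : ℕ} (P : Fin M → X → ℝ)
    (d : (X → ℝ) → (X → ℝ) → ℝ) (Δ α : ℝ) (i : Fin M) (ω : ℕ → X) : ℕ∞ :=
  sInf {t : ℕ∞ | ∃ n : ℕ, t = (n : ℕ∞) ∧ 1 ≤ n ∧
    gammaTh (Fintype.card X) M α n ≤ Zstat P d Δ i n ω}

/-- The stopping time `T*`. -/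
def Tstar [Fintype X] [DecidableEq X] {M : ℕ} (P : Fin M → X → ℝ)
    (d : (X → ℝ) → (X → ℝ) → ℝ) (Δ α : ℝ) (ω : ℕ → X) : ℕ∞ :=
  ⨅ i, Ti P d Δ α i ω

/-- Expected value of an `ℕ∞`-valued stopping time. -/
def ExpT [MeasurableSpace X] (μ : Measure (ℕ → X)) (T : (ℕ → X) → ℕ∞) : ℝ :=
  (∫⁻ ω, ((T ω : ℕ∞) : ℝ≥0∞) ∂μ).toReal

/-- Thresholds in the binary non-aware setting. -/
def gammaNA (K : ℕ) (α : ℝ) (n : ℕ) : ℝ :=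
  Real.log (Cζ / α) / n + 1 / (n : ℝ) ^ (0.85 : ℝ) + (K : ℝ) * Real.log ((n : ℝ) + 1) / n

/-- Admissible common channels in the non-aware setting. -/
def AdmNA [Fintype X] (d : (X → ℝ) → (X → ℝ) → ℝ) (Δ : ℝ) (P0 P1 : X → ℝ) :
    Set (X → X → ℝ) :=
  {A | RowStoch A ∧ max (d P0 (push P0 A)) (d P1 (push P1 A)) ≤ Δ ∧
    (∀ y, 0 < push P0 A y) ∧ ∀ y, 0 < push P1 A y}

/-- The statistic `S_n` in the non-aware setting. -/
def Sstat [Fintype X] [DecidableEq X] (P0 P1 : X → ℝ)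
    (d : (X → ℝ) → (X → ℝ) → ℝ) (Δ : ℝ) (n : ℕ) (ω : ℕ → X) : ℝ :=
  sInf {r | ∃ A ∈ AdmNA d Δ P0 P1,
    r = max (KL (emp n ω) (push P0 A)) (KL (emp n ω) (push P1 A))}

/-- Stopping time `τ*` of the non-aware test. -/
def tauNA [Fintype X] [DecidableEq X] (P0 P1 : X → ℝ)
    (d : (X → ℝ) → (X → ℝ) → ℝ) (Δ α : ℝ) (ω : ℕ → X) : ℕ∞ :=
  sInf {t : ℕ∞ | ∃ n : ℕ, t = (n : ℕ∞) ∧ 1 ≤ n ∧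
    gammaNA (Fintype.card X) α n ≤ Sstat P0 P1 d Δ n ω}

/-- A sequential test: a stopping time together with an `F_T`-measurable decision,
expressed functionally (the stopping decision and the final decision depend only on
the samples observed up to the stopping time). -/
structure SeqTest (X : Type*) (M : ℕ) where
  T : (ℕ → X) → ℕ∞
  dec : (ℕ → X) → Fin M
  adapted : ∀ ω ω' : ℕ → X, ∀ n : ℕ, T ω = (n : ℕ∞) →
    (∀ k < n, ω k = ω' k) → T ω' = (n : ℕ∞) ∧ dec ω' = dec ω

/-- Membership in the decision maker's strategy set `𝒮_D(α)`: all error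
probabilities are at most `α` whatever admissible strategy the adversary uses,
and the expected stopping times are finite. -/
def InSD [Fintype X] [MeasurableSpace X] {M : ℕ} (P : Fin M → X → ℝ)
    (d : (X → ℝ) → (X → ℝ) → ℝ) (Δ α : ℝ) (Φ : SeqTest X M) : Prop :=
  ∀ B : Fin M → X → X → ℝ, (∀ i, B i ∈ Adm d Δ (P i)) →
    ∀ ν : Fin M → Measure (ℕ → X), (∀ i, IsIID (ν i) (push (P i) (B i))) →
      ∀ i, ν i {ω | Φ.dec ω ≠ i} ≤ ENNReal.ofReal α ∧
        ∫⁻ ω, ((Φ.T ω : ℕ∞) : ℝ≥0∞) ∂(ν i) < ⊤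

/-! The bound holds for every sample path. An empirical distribution `Q̂` satisfies
`KL(Q̂ ‖ Q) ≤ -log min Q`, so `Z_i^{(m)} ≤ Q_max` at every time `m`, whereas `γ_m > log(1/α)/m`.
Hence no statistic can reach its threshold at a time `m` with `m * Q_max ≤ log(1/α)`. -/

lemma IsDist.le_one [Fintype X] {P : X → ℝ} (hP : IsDist P) (x : X) : P x ≤ 1 :=
  hP.2 ▸ Finset.single_le_sum (fun y _ => hP.1 y) (Finset.mem_univ x)

lemma IsDist.push [Fintype X] {P : X → ℝ} {A : X → X → ℝ} (hP : IsDist P) (hA : RowStoch A) :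
    IsDist (push P A) := by
  refine ⟨fun y => Finset.sum_nonneg fun x _ => mul_nonneg (hP.1 x) (hA.1 x y), ?_⟩
  unfold AHT.push
  rw [Finset.sum_comm]
  simp_rw [← Finset.mul_sum, hA.2, mul_one]
  exact hP.2

lemma isDist_emp [Fintype X] [DecidableEq X] {n : ℕ} (hn : n ≠ 0) (ω : ℕ → X) :
    IsDist (emp n ω) := by
  refine ⟨fun a => by unfold emp; positivity, ?_⟩
  have hcard : ∑ a : X, ((range n).filter fun k => ω k = a).card = n := by
    rw [← Finset.card_eq_sum_card_fiberwise (fun k _ => Finset.mem_univ (ω k)), card_range]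
  simp only [emp, ← Finset.sum_div]
  rw [← Nat.cast_sum, hcard, div_self (Nat.cast_ne_zero.2 hn)]

lemma sub_le_mul_log_div {x y : ℝ} (hx : 0 ≤ x) (hy : 0 < y) :
    x - y ≤ x * Real.log (x / y) := by
  rcases hx.eq_or_lt with rfl | hx
  · simp [hy.le]
  have h := mul_le_mul_of_nonneg_left (Real.one_sub_inv_le_log_of_pos (div_pos hx hy)) hx.le
  rwa [inv_div, mul_sub, mul_one, mul_div_cancel₀ _ hx.ne'] at h

lemma KL_nonneg [Fintype X] {P Q : X → ℝ} (hP : IsDist P) (hQ : IsDist Q)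
    (hQpos : ∀ x, 0 < Q x) : 0 ≤ KL P Q :=
  calc (0 : ℝ) = ∑ x, (P x - Q x) := by rw [Finset.sum_sub_distrib, hP.2, hQ.2, sub_self]
    _ ≤ KL P Q := Finset.sum_le_sum fun x _ => sub_le_mul_log_div (hP.1 x) (hQpos x)

lemma KL_le_neg_log_iInf [Fintype X] [Nonempty X] {P Q : X → ℝ} (hP : IsDist P)
    (hQ : ∀ x, 0 < Q x) : KL P Q ≤ -Real.log (⨅ y, Q y) := by
  obtain ⟨y₀, hy₀⟩ := exists_eq_ciInf_of_finite (f := Q)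
  have hterm : ∀ x, P x * Real.log (P x / Q x) ≤ P x * -Real.log (Q y₀) := by
    intro x
    rcases (hP.1 x).eq_or_lt with hx | hx
    · simp [← hx]
    refine mul_le_mul_of_nonneg_left ?_ hx.le
    rw [Real.log_div hx.ne' (hQ x).ne']
    have hQ_min : Q y₀ ≤ Q x := hy₀ ▸ ciInf_le (Finite.bddBelow_range Q) x
    linarith [Real.log_nonpos hx.le (hP.le_one x), Real.log_le_log (hQ y₀) hQ_min]
  calc KL P Q ≤ ∑ x, P x * -Real.log (Q y₀) := Finset.sum_le_sum fun x _ => hterm x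
    _ = -Real.log (⨅ y, Q y) := by rw [← Finset.sum_mul, hP.2, one_mul, hy₀]

lemma neg_log_iInf_nonneg [Fintype X] [Nonempty X] {Q : X → ℝ} (hQ : IsDist Q) :
    0 ≤ -Real.log (⨅ y, Q y) := by
  have h1 : ⨅ y, Q y ≤ 1 :=
    (ciInf_le (Finite.bddBelow_range Q) (Classical.arbitrary X)).trans (hQ.le_one _)
  linarith [Real.log_nonpos (le_ciInf hQ.1) h1]

lemma Zstat_le [Fintype X] [DecidableEq X] [Nonempty X] {M : ℕ} {P : Fin M → X → ℝ}
    (hP : ∀ i, IsDist (P i)) {d : (X → ℝ) → (X → ℝ) → ℝ} {Δ : ℝ} {i j : Fin M} (hji : j ≠ i)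
    {A : X → X → ℝ} (hA : A ∈ Adm d Δ (P j)) {n : ℕ} (hn : n ≠ 0) (ω : ℕ → X) :
    Zstat P d Δ i n ω ≤ -Real.log (⨅ y, push (P j) A y) := by
  have hbdd : BddBelow
      {r | ∃ j, j ≠ i ∧ ∃ A ∈ Adm d Δ (P j), r = KL (emp n ω) (push (P j) A)} := by
    refine ⟨0, ?_⟩
    rintro r ⟨j', -, A', hA', rfl⟩
    exact KL_nonneg (isDist_emp hn ω) ((hP j').push hA'.1) hA'.2.2
  exact (csInf_le hbdd ⟨j, hji, A, hA, rfl⟩).trans (KL_le_neg_log_iInf (isDist_emp hn ω) hA.2.2)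

lemma summable_exp_neg_rpow {s : ℝ} (hs : 0 < s) :
    Summable fun n : ℕ => Real.exp (-((n : ℝ) + 1) ^ s) := by
  have hexp : (fun x : ℝ => Real.exp (-x ^ s)) =o[atTop] fun x => x ^ (-2 : ℝ) := by
    refine ((isLittleO_exp_neg_mul_rpow_atTop one_pos (-2 / s)).comp_tendsto
      (tendsto_rpow_atTop hs)).congr' (by simp [Function.comp_def]) ?_
    filter_upwards [eventually_ge_atTop 0] with x hx
    rw [Function.comp_apply, ← Real.rpow_mul hx, mul_div_cancel₀ _ hs.ne']
  have hsucc : Summable fun n : ℕ => ((n : ℝ) + 1) ^ (-2 : ℝ) := by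
    simpa using (summable_nat_add_iff 1).2 (Real.summable_nat_rpow.2 (by norm_num : (-2 : ℝ) < -1))
  exact summable_of_isBigO_nat hsucc
    (hexp.comp_tendsto (tendsto_atTop_add_const_right _ 1 tendsto_natCast_atTop_atTop)).isBigO

lemma exp_neg_one_le_Cζ : Real.exp (-1) ≤ Cζ := by
  unfold Cζ
  simpa using (summable_exp_neg_rpow (s := 0.15) (by norm_num)).le_tsum 0
    fun n _ => (Real.exp_pos _).le

lemma log_one_div_div_lt_gammaTh {K M : ℕ} (hK : 1 ≤ K) (hM : 2 ≤ M) {β : ℝ} (hβ : 0 < β)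
    {m : ℕ} (hm : m ≠ 0) : Real.log (1 / β) / m < gammaTh K M β m := by
  have hm1 : (1 : ℝ) ≤ m := Nat.one_le_cast.2 (Nat.one_le_iff_ne_zero.2 hm)
  have hCζ : -1 ≤ Real.log Cζ := by
    simpa using Real.log_le_log (Real.exp_pos _) exp_neg_one_le_Cζ
  have hlogC : Real.log (Cζ / β) = Real.log Cζ + Real.log (1 / β) := by
    rw [← Real.log_mul ((Real.exp_pos _).trans_le exp_neg_one_le_Cζ).ne' (by positivity),
      mul_one_div]
  -- `m ^ 0.85 ≤ m` makes the middle term of `γ_m` at least `1 / m`, which absorbs `log C ≥ -1`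
  have hrpow : 1 / (m : ℝ) ≤ 1 / (m : ℝ) ^ (0.85 : ℝ) := by
    refine one_div_le_one_div_of_le (Real.rpow_pos_of_pos (by linarith) _) ?_
    simpa using Real.rpow_le_rpow_of_exponent_le hm1 (by norm_num : (0.85 : ℝ) ≤ 1)
  have hKlog : 0 < (K : ℝ) * Real.log ((m : ℝ) + 1) :=
    mul_pos (by exact_mod_cast hK) (Real.log_pos (by linarith))
  have hMlog : 0 ≤ Real.log ((M : ℝ) - 1) :=
    Real.log_nonneg (by linarith [show (2 : ℝ) ≤ M by exact_mod_cast hM])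
  have hsum : Real.log (1 / β) / m <
      (Real.log (Cζ / β) + 1 + ((K : ℝ) * Real.log ((m : ℝ) + 1) + Real.log ((M : ℝ) - 1))) / m :=
    div_lt_div_of_pos_right (by linarith) (by linarith)
  unfold gammaTh
  rw [add_div, add_div] at hsum
  linarith

lemma lt_Ti_of_forall_Zstat_lt [Fintype X] [DecidableEq X] {M : ℕ} {P : Fin M → X → ℝ}
    {d : (X → ℝ) → (X → ℝ) → ℝ} {Δ α : ℝ} {i : Fin M} {ω : ℕ → X} {n : ℕ}
    (h : ∀ m, 1 ≤ m → m ≤ n → Zstat P d Δ i m ω < gammaTh (Fintype.card X) M α m) :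
    (n : ℕ∞) < Ti P d Δ α i ω := by
  rw [← ENat.add_one_le_iff (ENat.natCast_ne_top n), Ti]
  refine le_sInf ?_
  rintro _ ⟨m, rfl, hm, hγ⟩
  by_contra! hmn
  exact (h m hm (Nat.lt_succ_iff.1 (by exact_mod_cast hmn))).not_ge hγ

lemma lt_Tstar_of_mul_le [Fintype X] [DecidableEq X] [Nonempty X] {M : ℕ} (hM : 2 ≤ M)
    {P : Fin M → X → ℝ} (hP : ∀ i, IsDist (P i)) {d : (X → ℝ) → (X → ℝ) → ℝ} {Δ : ℝ}
    {A : Fin M → X → X → ℝ} (hA : ∀ i, A i ∈ Adm d Δ (P i)) {β : ℝ} (hβ : 0 < β) {n : ℕ}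
    (hn : n * ⨆ i, -Real.log (⨅ y, push (P i) (A i) y) ≤ Real.log (1 / β)) (ω : ℕ → X) :
    (n : ℕ∞) < Tstar P d Δ β ω := by
  set Qmax := ⨆ i, -Real.log (⨅ y, push (P i) (A i) y)
  have hQmax : 0 ≤ Qmax := Real.iSup_nonneg fun j => neg_log_iInf_nonneg ((hP j).push (hA j).1)
  have : Nontrivial (Fin M) := Fin.nontrivial_iff_two_le.2 hM
  rw [← ENat.add_one_le_iff (ENat.natCast_ne_top n), Tstar]
  refine le_iInf fun i => (ENat.add_one_le_iff (ENat.natCast_ne_top n)).2 ?_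
  refine lt_Ti_of_forall_Zstat_lt fun m hm hmn => ?_
  obtain ⟨j, hji⟩ := exists_ne i
  have hm0 : m ≠ 0 := Nat.one_le_iff_ne_zero.1 hm
  calc Zstat P d Δ i m ω ≤ -Real.log (⨅ y, push (P j) (A j) y) := Zstat_le hP hji (hA j) hm0 ω
    _ ≤ Qmax := le_ciSup (f := fun j => -Real.log (⨅ y, push (P j) (A j) y))
        (Finite.bddAbove_range _) j
    _ ≤ Real.log (1 / β) / m := by
      rw [le_div_iff₀ (by exact_mod_cast Nat.pos_of_ne_zero hm0), mul_comm]
      exact (mul_le_mul_of_nonneg_right (by exact_mod_cast hmn) hQmax).trans hn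
    _ < gammaTh (Fintype.card X) M β m :=
      log_one_div_div_lt_gammaTh Fintype.card_pos hM hβ hm0

theorem Tstar_lower_bound_general {X : Type*} [Fintype X] [DecidableEq X] [Nonempty X]
    [MeasurableSpace X]
    {M : ℕ} (hM : 2 ≤ M) (P : Fin M → X → ℝ) (hP : ∀ i, IsDist (P i))
    (d : (X → ℝ) → (X → ℝ) → ℝ) (Δ : ℝ)
    (Atil : Fin M → X → X → ℝ) (hAtil : ∀ i, Atil i ∈ Adm d Δ (P i))
    (μ : Fin M → Measure (ℕ → X))
    (Qmax : ℝ) (hQmax : Qmax = ⨆ i : Fin M, -Real.log (⨅ y : X, push (P i) (Atil i) y))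
    (α : ℝ) (hα0 : 0 < α) (i : Fin M) :
    (∀ n : ℕ, (n : ℝ) < Real.log (1 / α) / Qmax →
        μ i {ω | Tstar P d Δ α ω ≤ (n : ℕ∞)} = 0) ∧
    (∀ᵐ ω ∂(μ i), ∀ n : ℕ, Tstar P d Δ α ω ≤ (n : ℕ∞) →
        Real.log (1 / α) / Qmax ≤ (n : ℝ)) ∧
    (∀ᵐ ω ∂(μ i), ∀ N : ℕ, ∀ᶠ β in 𝓝[>] (0 : ℝ), (N : ℕ∞) ≤ Tstar P d Δ β ω) := by
  have hQ0 : 0 ≤ Qmax :=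
    hQmax ▸ Real.iSup_nonneg fun j => neg_log_iInf_nonneg ((hP j).push (hAtil j).1)
  have below : ∀ n : ℕ, (n : ℝ) < Real.log (1 / α) / Qmax → ∀ ω, (n : ℕ∞) < Tstar P d Δ α ω := by
    intro n hn
    -- `Qmax = 0` would make the right-hand side the junk value `0`
    have hQpos : 0 < Qmax := hQ0.lt_of_ne fun h => by
      rw [← h, div_zero] at hn
      exact hn.not_ge n.cast_nonneg
    exact lt_Tstar_of_mul_le hM hP hAtil hα0 (hQmax ▸ ((lt_div_iff₀ hQpos).1 hn).le)
  refine ⟨fun n hn => ?_, ae_of_all _ fun ω n hT => ?_, ae_of_all _ fun ω N => ?_⟩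
  · have hempty : {ω | Tstar P d Δ α ω ≤ n} = ∅ :=
      Set.eq_empty_of_forall_notMem fun ω => (below n hn ω).not_ge
    rw [hempty, measure_empty]
  · by_contra! h
    exact (below n h ω).not_ge hT
  · filter_upwards [Ioo_mem_nhdsGT (Real.exp_pos (-(N * Qmax)))] with β ⟨hβ0, hβ⟩
    refine (lt_Tstar_of_mul_le hM hP hAtil hβ0 (hQmax ▸ ?_) ω).le
    rw [one_div, Real.log_inv, le_neg]
    simpa using (Real.log_lt_log hβ0 hβ).le

/-- under H_i, P_i(T* ≤ n) = 0 for every n < log(1/α)/Q_max, so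
T* ≥ log(1/α)/Q_max almost surely, and T* → ∞ almost surely as α → 0⁺. -/
theorem Tstar_lower_bound {X : Type*} [Fintype X] [DecidableEq X] [Nonempty X]
    [MeasurableSpace X]
    {M : ℕ} (hM : 2 ≤ M) (P : Fin M → X → ℝ) (hP : ∀ i, IsDist (P i))
    (hPd : ∀ i j, i ≠ j → P i ≠ P j)
    (d : (X → ℝ) → (X → ℝ) → ℝ) (Δ : ℝ) (hΔ : 0 < Δ)
    (Atil : Fin M → X → X → ℝ) (hAtil : ∀ i, Atil i ∈ Adm d Δ (P i))
    (μ : Fin M → Measure (ℕ → X)) (hμ : ∀ i, IsIID (μ i) (push (P i) (Atil i)))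
    (Qmax : ℝ) (hQmax : Qmax = ⨆ i : Fin M, -Real.log (⨅ y : X, push (P i) (Atil i) y))
    (α : ℝ) (hα0 : 0 < α) (hα1 : α < 1) (i : Fin M) :
    (∀ n : ℕ, (n : ℝ) < Real.log (1 / α) / Qmax →
        μ i {ω | Tstar P d Δ α ω ≤ (n : ℕ∞)} = 0) ∧
    (∀ᵐ ω ∂(μ i), ∀ n : ℕ, Tstar P d Δ α ω ≤ (n : ℕ∞) →
        Real.log (1 / α) / Qmax ≤ (n : ℝ)) ∧
    (∀ᵐ ω ∂(μ i), ∀ N : ℕ, ∀ᶠ β in 𝓝[>] (0 : ℝ), (N : ℕ∞) ≤ Tstar P d Δ β ω) :=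
  Tstar_lower_bound_general hM P hP d Δ Atil hAtil μ Qmax hQmax α hα0 i

end

end AHT
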